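/- arXiv:2601.20677 — 8 statements merged into one kernel-verified Lean document; each statement's English description precedes it below -/
import Mathlib

section
/- Let (a_j) and (b_j) be sequences of nonnegative reals. Suppose there exist constants 0 < q < 1, 0 < δ ≤ 1, and C > 0 such that a_{j+1} ≤ q·a_j + b_j for all j, and ∑_{j'=j}^{j+N} b_{j'}² ≤ C·(N+1)^{1-δ}·a_j² for all j, N ∈ ℕ. Then (a_j) is tail summable: there exists a constant C̃ > 0 such that ∑_{j'=j+1}^∞ a_{j'} ≤ C̃·a_j for all j ∈ ℕ. -/
/-!
Cauchy–Schwarz turns the ℓ² bound on `b` into `∑_{i<M} b (j+i) ≤ √C M^(1-δ/2) a j`, and summing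
the recursion over a block then gives `∑_{k<M} a (j+1+k) ≤ K M^(1-δ/2) a j` with
`K = (q + √C)/(1 - q)`. Since `M^(1-δ/2) = o(M)`, for a suitable block length `N` the block sums
are at most `L a j` with `L < N`. Hence within every block some `a (j+n)` is at most `(L/N) a j`,
and restarting from that index sums a geometric series.
-/

open Finset Filter

lemma sum_range_le_sqrt_mul_rpow_of_sum_sq_le {b : ℕ → ℝ} {C δ x : ℝ} {j : ℕ}
    (hC : 0 ≤ C) (hx : 0 ≤ x)
    (h : ∀ N : ℕ, ∑ j' ∈ Icc j (j + N), b j' ^ 2 ≤ C * ((N : ℝ) + 1) ^ (1 - δ) * x ^ 2)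
    (N : ℕ) :
    ∑ i ∈ range (N + 1), b (j + i) ≤ √C * ((N : ℝ) + 1) ^ (1 - δ / 2) * x := by
  have hN : (0 : ℝ) < N + 1 := by positivity
  have hsq : ∑ i ∈ range (N + 1), b (j + i) ^ 2 ≤ C * ((N : ℝ) + 1) ^ (1 - δ) * x ^ 2 := by
    have := h N
    rwa [← Ico_add_one_right_eq_Icc, sum_Ico_eq_sum_range,
      show j + N + 1 - j = N + 1 by omega] at this
  have hpow : ((N : ℝ) + 1) * ((N : ℝ) + 1) ^ (1 - δ) = (((N : ℝ) + 1) ^ (1 - δ / 2)) ^ 2 :=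
    calc _ = ((N : ℝ) + 1) ^ (1 + (1 - δ)) := by rw [Real.rpow_add hN, Real.rpow_one]
      _ = _ := by rw [← Real.rpow_mul_natCast hN.le]; ring_nf
  have hsq_le : (∑ i ∈ range (N + 1), b (j + i)) ^ 2
      ≤ (√C * ((N : ℝ) + 1) ^ (1 - δ / 2) * x) ^ 2 :=
    calc _ ≤ ((N : ℝ) + 1) * ∑ i ∈ range (N + 1), b (j + i) ^ 2 := by
          simpa using sq_sum_le_card_mul_sum_sq (s := range (N + 1)) (f := fun i => b (j + i))
      _ ≤ ((N : ℝ) + 1) * (C * ((N : ℝ) + 1) ^ (1 - δ) * x ^ 2) := by gcongr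
      _ = _ := by rw [mul_pow, mul_pow, Real.sq_sqrt hC, ← hpow]; ring
  exact (le_abs_self _).trans (abs_le_of_sq_le_sq hsq_le (by positivity))

lemma one_sub_mul_sum_range_le {a b : ℕ → ℝ} {q : ℝ} (ha : ∀ j, 0 ≤ a j) (hq : 0 ≤ q)
    (hrec : ∀ j, a (j + 1) ≤ q * a j + b j) (j M : ℕ) :
    (1 - q) * ∑ k ∈ range M, a (j + 1 + k) ≤ q * a j + ∑ k ∈ range M, b (j + k) := by
  set T := ∑ k ∈ range M, a (j + 1 + k)
  have hshift : ∑ k ∈ range M, a (j + k) ≤ a j + T :=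
    calc _ ≤ ∑ k ∈ range (M + 1), a (j + k) :=
          sum_le_sum_of_subset_of_nonneg (range_subset_range.2 M.le_succ) fun _ _ _ => ha _
      _ = a j + T := by
          rw [sum_range_succ', add_comm]
          simp only [T, add_zero, add_assoc, add_comm 1]
  have hT : T ≤ q * (a j + T) + ∑ k ∈ range M, b (j + k) :=
    calc T ≤ ∑ k ∈ range M, (q * a (j + k) + b (j + k)) :=
          sum_le_sum fun k _ => by rw [Nat.add_right_comm]; exact hrec _
      _ = q * ∑ k ∈ range M, a (j + k) + ∑ k ∈ range M, b (j + k) := by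
          rw [sum_add_distrib, mul_sum]
      _ ≤ _ := by gcongr
  linarith

lemma sum_range_le_rpow_mul {a b : ℕ → ℝ} {q C δ : ℝ} (ha : ∀ j, 0 ≤ a j) (hq0 : 0 ≤ q)
    (hq1 : q < 1) (hδ : δ ≤ 2) (hC : 0 ≤ C) (hrec : ∀ j, a (j + 1) ≤ q * a j + b j)
    (hsum : ∀ j N : ℕ, ∑ j' ∈ Icc j (j + N), b j' ^ 2 ≤ C * ((N : ℝ) + 1) ^ (1 - δ) * a j ^ 2)
    (j : ℕ) {M : ℕ} (hM : 0 < M) :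
    ∑ k ∈ range M, a (j + 1 + k) ≤ (q + √C) / (1 - q) * (M : ℝ) ^ (1 - δ / 2) * a j := by
  obtain ⟨N, rfl⟩ := Nat.exists_eq_add_one.2 hM
  have hb := sum_range_le_sqrt_mul_rpow_of_sum_sq_le hC (ha j) (hsum j) N
  have hrec_sum := one_sub_mul_sum_range_le ha hq0 hrec j (N + 1)
  have hone : 1 ≤ ((N : ℝ) + 1) ^ (1 - δ / 2) :=
    Real.one_le_rpow (by linarith [N.cast_nonneg (α := ℝ)]) (by linarith)
  have hqa : q * a j ≤ q * ((N : ℝ) + 1) ^ (1 - δ / 2) * a j := by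
    nlinarith [mul_nonneg hq0 (ha j)]
  rw [div_mul_eq_mul_div, div_mul_eq_mul_div, le_div_iff₀ (sub_pos.2 hq1)]
  push_cast
  linarith

lemma exists_lt_le_div_of_sum_range_le {f : ℕ → ℝ} {c : ℝ} {N : ℕ} (hN : 0 < N)
    (h : ∑ k ∈ range N, f k ≤ c) : ∃ n < N, f n ≤ c / N := by
  have hconst : ∑ _k ∈ range N, c / N = c := by
    rw [sum_const, card_range, nsmul_eq_mul, mul_div_cancel₀ _ (by positivity)]
  obtain ⟨n, hn, hle⟩ := exists_le_of_sum_le (nonempty_range_iff.2 hN.ne') (hconst ▸ h)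
  exact ⟨n, mem_range.1 hn, hle⟩

lemma sum_range_le_of_block_sum_le {a : ℕ → ℝ} {L : ℝ} {N : ℕ} (ha : ∀ j, 0 ≤ a j)
    (hL0 : 0 ≤ L) (hLN : L < N) (hblock : ∀ j, ∑ k ∈ range N, a (j + 1 + k) ≤ L * a j)
    (M j : ℕ) :
    ∑ k ∈ range M, a (j + 1 + k) ≤ L / (1 - L / N) * a j := by
  have hN : (0 : ℝ) < N := hL0.trans_lt hLN
  have hθ : 0 < 1 - L / N := sub_pos.2 ((div_lt_one hN).2 hLN)
  set c := L / (1 - L / N)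
  have hc : c * (1 - L / N) = L := div_mul_cancel₀ _ hθ.ne'
  have hLc : L ≤ c := le_div_self hL0 hθ (by linarith [div_nonneg hL0 hN.le])
  induction M using Nat.strong_induction_on generalizing j with
  | _ M ih =>
  by_cases hMN : M ≤ N
  · calc _ ≤ ∑ k ∈ range N, a (j + 1 + k) :=
          sum_le_sum_of_subset_of_nonneg (range_subset_range.2 hMN) fun _ _ _ => ha _
      _ ≤ L * a j := hblock j
      _ ≤ c * a j := by gcongr; exact ha j
  · obtain ⟨n, hn, hle⟩ := exists_lt_le_div_of_sum_range_le (Nat.cast_pos.1 hN) (hblock j)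
    obtain ⟨M', rfl⟩ : ∃ M', M = (n + 1) + M' := ⟨M - (n + 1), by omega⟩
    have head : ∑ k ∈ range (n + 1), a (j + 1 + k) ≤ L * a j :=
      (sum_le_sum_of_subset_of_nonneg (range_subset_range.2 hn) fun _ _ _ => ha _).trans
        (hblock j)
    have tail : ∑ k ∈ range M', a (j + 1 + (n + 1 + k)) ≤ c * (L * a j / N) :=
      calc _ = ∑ k ∈ range M', a (j + 1 + n + 1 + k) := by simp only [add_assoc]
        _ ≤ c * a (j + 1 + n) := ih M' (by omega) _
        _ ≤ c * (L * a j / N) := by gcongr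
    rw [sum_range_add]
    calc _ ≤ L * a j + c * (L * a j / N) := add_le_add head tail
      _ = c * a j := by linear_combination (-a j) * hc

lemma exists_nat_mul_rpow_lt (K : ℝ) {ε : ℝ} (hε : 0 < ε) :
    ∃ N : ℕ, 0 < N ∧ K * (N : ℝ) ^ (1 - ε) < N := by
  obtain ⟨N, hN, hKN⟩ := ((eventually_gt_atTop 0).and
    (((tendsto_rpow_atTop hε).comp tendsto_natCast_atTop_atTop).eventually_gt_atTop K)).exists
  have hN' : (0 : ℝ) < N := Nat.cast_pos.2 hN
  refine ⟨N, hN, ?_⟩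
  calc K * (N : ℝ) ^ (1 - ε) < (N : ℝ) ^ ε * (N : ℝ) ^ (1 - ε) :=
        mul_lt_mul_of_pos_right hKN (by positivity)
    _ = N := by rw [← Real.rpow_add hN', add_sub_cancel, Real.rpow_one]

theorem tail_summability_criterion_general
    (a b : ℕ → ℝ) (ha : ∀ j, 0 ≤ a j)
    (q C δ : ℝ) (hq0 : 0 < q) (hq1 : q < 1) (hδ0 : 0 < δ) (hδ1 : δ ≤ 1) (hC : 0 < C)
    (hrec : ∀ j, a (j + 1) ≤ q * a j + b j)
    (hsum : ∀ j N : ℕ, ∑ j' ∈ Finset.Icc j (j + N), (b j') ^ 2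
      ≤ C * ((N : ℝ) + 1) ^ (1 - δ) * (a j) ^ 2) :
    ∃ Ctil : ℝ, 0 < Ctil ∧ ∀ j, ∑' k : ℕ, a (j + 1 + k) ≤ Ctil * a j := by
  set K := (q + √C) / (1 - q)
  have hK : 0 < K := div_pos (add_pos_of_pos_of_nonneg hq0 (Real.sqrt_nonneg C)) (sub_pos.2 hq1)
  obtain ⟨N, hN, hLN⟩ := exists_nat_mul_rpow_lt K (half_pos hδ0)
  set L := K * (N : ℝ) ^ (1 - δ / 2)
  have hL : 0 < L := by positivity
  have hblock : ∀ j, ∑ k ∈ range N, a (j + 1 + k) ≤ L * a j := fun j =>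
    sum_range_le_rpow_mul ha hq0.le hq1 (by linarith) hC.le hrec hsum j hN
  refine ⟨L / (1 - L / N), div_pos hL (sub_pos.2 ((div_lt_one (by positivity)).2 hLN)),
    fun j => ?_⟩
  exact Real.tsum_le_of_sum_range_le (fun _ => ha _) fun M =>
    sum_range_le_of_block_sum_le ha hL.le hLN hblock M j

/-- Tail summability criterion. -/
theorem tail_summability_criterion
    (a b : ℕ → ℝ) (ha : ∀ j, 0 ≤ a j) (hb : ∀ j, 0 ≤ b j)
    (q C δ : ℝ) (hq0 : 0 < q) (hq1 : q < 1) (hδ0 : 0 < δ) (hδ1 : δ ≤ 1) (hC : 0 < C)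
    (hrec : ∀ j, a (j + 1) ≤ q * a j + b j)
    (hsum : ∀ j N : ℕ, ∑ j' ∈ Finset.Icc j (j + N), (b j') ^ 2
      ≤ C * ((N : ℝ) + 1) ^ (1 - δ) * (a j) ^ 2) :
    ∃ Ctil : ℝ, 0 < Ctil ∧ ∀ j, ∑' k : ℕ, a (j + 1 + k) ≤ Ctil * a j :=
  tail_summability_criterion_general a b ha q C δ hq0 hq1 hδ0 hδ1 hC hrec hsum
end

section
/- Let (a_j) be a sequence of nonnegative reals that is tail summable: ∑_{j'=j+1}^∞ a_{j'} ≤ C'·a_j for all j ∈ ℕ with some constant C' > 0. Then (a_j) converges R-linearly with constants C_lin ≤ C' + 1 and q_lin ≤ (1 + 1/C')^{-1}, i.e., a_{j+N} ≤ (C'+1)·(1+1/C')^{-N}·a_j for all j, N ∈ ℕ. -/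
/-- Tail summability implies R-linear convergence with explicit constants. -/
theorem rlinear_of_tail_summable
    (a : ℕ → ℝ) (ha : ∀ j, 0 ≤ a j) (hsummable : Summable a)
    (C' : ℝ) (hC' : 0 < C')
    (htail : ∀ j : ℕ, ∑' k : ℕ, a (j + 1 + k) ≤ C' * a j) :
    ∀ j N : ℕ, a (j + N) ≤ (C' + 1) * ((1 + 1 / C')⁻¹) ^ N * a j := by
  set t : ℕ → ℝ := fun j => ∑' k, a (j + k) with ht
  have hsum : ∀ j, Summable fun k => a (j + k) := by
    intro j
    have := (summable_nat_add_iff j).2 hsummable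
    simpa [add_comm] using this
  have hdecomp : ∀ j, t j = a j + t (j + 1) := by
    intro j
    have h0 := Summable.tsum_eq_zero_add (hsum j)
    simpa [ht, add_assoc, add_comm, add_left_comm] using h0
  have ht_tail : ∀ j, t (j + 1) ≤ C' * a j := by
    intro j
    have := htail j
    simpa [ht] using this
  have ht_nonneg : ∀ j, 0 ≤ t j := fun j => tsum_nonneg fun k => ha _
  have ha_le_t : ∀ j, a j ≤ t j := by
    intro j
    rw [hdecomp j]
    linarith [ht_nonneg (j + 1)]
  set q : ℝ := (1 + 1 / C')⁻¹ with hq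
  have hq_eq : q = C' / (C' + 1) := by
    rw [hq]
    field_simp
  have hqpos : 0 ≤ q := by rw [hq_eq]; positivity
  have hstep : ∀ j, t (j + 1) ≤ q * t j := by
    intro j
    have h1 := ht_tail j
    have h2 := hdecomp j
    rw [hq_eq, div_mul_eq_mul_div, le_div_iff₀ (by linarith)]
    nlinarith [ht_nonneg (j + 1)]
  intro j N
  have hiter : t (j + N) ≤ q ^ N * t j := by
    induction N with
    | zero => simp
    | succ n ih =>
      have : t (j + (n + 1)) ≤ q * (q ^ n * t j) := by
        calc t (j + (n + 1)) = t (j + n + 1) := by ring_nf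
          _ ≤ q * t (j + n) := hstep (j + n)
          _ ≤ q * (q ^ n * t j) := by nlinarith
      calc t (j + (n + 1)) ≤ q * (q ^ n * t j) := this
        _ = q ^ (n + 1) * t j := by ring
  have htj : t j ≤ (C' + 1) * a j := by
    rw [hdecomp j]
    linarith [ht_tail j]
  have hqN : 0 ≤ q ^ N := pow_nonneg hqpos N
  calc a (j + N) ≤ t (j + N) := ha_le_t _
    _ ≤ q ^ N * t j := hiter
    _ ≤ q ^ N * ((C' + 1) * a j) := by nlinarith
    _ = (C' + 1) * q ^ N * a j := by ring
end

section
/- Let H be a real Hilbert space, b : H × H → ℝ a bounded bilinear form satisfying C_ell·‖v‖² ≤ b(v,v) and b(v,w) ≤ C_bnd·‖v‖·‖w‖ for all v, w ∈ H with constants 0 < C_ell ≤ C_bnd. Let a(v,w) := (b(v,w)+b(w,v))/2 be its symmetric part, with induced energy norm |||v||| := a(v,v)^{1/2}. For δ > 0, define the Zarantonello operator Z^δ : H → H by a(Z^δ v, w) = a(v,w) + δ·(F(w) − b(v,w)) for all w ∈ H, where F ∈ H* is a fixed bounded linear functional. Then Z^δ is Lipschitz continuous in the energy norm: |||Z^δ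 v − Z^δ w||| ≤ C[δ]·|||v − w||| for all v, w ∈ H, where C[δ] = (1 − δ·(2 − δ·C_bnd²/C_ell²))^{1/2}. -/
set_option maxHeartbeats 1000000

open RealInnerProductSpace

/-- Lipschitz continuity of the Zarantonello operator in the energy norm. -/
theorem zarantonello_lipschitz
    {H : Type*} [NormedAddCommGroup H] [InnerProductSpace ℝ H] [CompleteSpace H]
    (b : H →ₗ[ℝ] H →ₗ[ℝ] ℝ) (Cell Cbnd : ℝ)
    (hCell : 0 < Cell) (hCC : Cell ≤ Cbnd)
    (hell : ∀ v : H, Cell * ‖v‖ ^ 2 ≤ b v v)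
    (hbnd : ∀ v w : H, b v w ≤ Cbnd * ‖v‖ * ‖w‖)
    (a : H → H → ℝ) (ha : ∀ v w, a v w = (b v w + b w v) / 2)
    (F : H →L[ℝ] ℝ) (δ : ℝ) (hδ : 0 < δ)
    (Z : H → H)
    (hZ : ∀ v w : H, a (Z v) w = a v w + δ * (F w - b v w)) :
    ∀ v w : H,
      Real.sqrt (a (Z v - Z w) (Z v - Z w))
        ≤ Real.sqrt (1 - δ * (2 - δ * Cbnd ^ 2 / Cell ^ 2)) *
          Real.sqrt (a (v - w) (v - w)) := by
  have habs : ∀ x y : H, |b x y| ≤ Cbnd * ‖x‖ * ‖y‖ := by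
    intro x y
    rw [abs_le]
    refine ⟨?_, hbnd x y⟩
    have h := hbnd (-x) y
    simp only [map_neg, LinearMap.neg_apply, norm_neg] at h
    linarith
  -- symmetric part as a linear map
  set aL : H →ₗ[ℝ] H →ₗ[ℝ] ℝ := (2:ℝ)⁻¹ • (b + b.flip) with haLdef
  have haL : ∀ x y, aL x y = a x y := by
    intro x y
    simp only [haLdef, LinearMap.smul_apply, LinearMap.add_apply, LinearMap.flip_apply,
      smul_eq_mul, ha]
    ring
  have haa : ∀ x, a x x = b x x := by intro x; rw [ha]; ring
  have hsymm : ∀ x y, a x y = a y x := by intro x y; rw [ha, ha]; ring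
  -- continuous bilinear version of a
  set A : H →L[ℝ] H →L[ℝ] ℝ := LinearMap.mkContinuous₂ aL Cbnd (by
    intro x y
    rw [Real.norm_eq_abs, haL, ha]
    have h1 := habs x y
    have h2 := habs y x
    rw [abs_le] at h1 h2 ⊢
    constructor <;> [linarith [h1.1, h2.1]; linarith [h1.2, h2.2]]) with hAdef
  have hA : ∀ x y, A x y = a x y := by
    intro x y; rw [hAdef, LinearMap.mkContinuous₂_apply, haL]
  have coA : IsCoercive A := by
    refine ⟨Cell, hCell, fun u => ?_⟩
    rw [hA, haa]
    calc Cell * ‖u‖ * ‖u‖ = Cell * ‖u‖ ^ 2 := by ring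
      _ ≤ b u u := hell u
  intro v w
  set e := v - w with he
  -- Riesz representative r with a r x = b e x
  obtain ⟨r, hr⟩ : ∃ r : H, ∀ x, a r x = b e x := by
    refine ⟨coA.continuousLinearEquivOfBilin.symm
      ((InnerProductSpace.toDual ℝ H).symm
        (LinearMap.mkContinuous (b e) (Cbnd * ‖e‖) (by
          intro y; rw [Real.norm_eq_abs]
          calc |b e y| ≤ Cbnd * ‖e‖ * ‖y‖ := habs e y))), fun x => ?_⟩
    rw [← hA, ← coA.continuousLinearEquivOfBilin_apply,
      ContinuousLinearEquiv.apply_symm_apply, InnerProductSpace.toDual_symm_apply]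
    rfl
  -- linearity helpers
  have hsub : ∀ (x₁ x₂ y : H), a (x₁ - x₂) y = a x₁ y - a x₂ y := by
    intro x₁ x₂ y
    rw [← haL, ← haL, ← haL, map_sub, LinearMap.sub_apply]
  have hsmul : ∀ (c : ℝ) (x y : H), a (c • x) y = c * a x y := by
    intro c x y
    rw [← haL, ← haL, map_smul, LinearMap.smul_apply, smul_eq_mul]
  clear hA coA hAdef
  clear_value A aL e
  clear A haL haLdef aL
  -- the key identity
  set u : H := e - δ • r with hudef
  have hua : ∀ x, a u x = a e x - δ * b e x := by
    intro x
    rw [hudef, hsub, hsmul, hr]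
  have key : ∀ x, a (Z v - Z w) x = a u x := by
    intro x
    rw [hsub, hZ v x, hZ w x, hua, he, hsub, ← sub_sub, map_sub, LinearMap.sub_apply]
    ring
  have hZu : a (Z v - Z w) (Z v - Z w) = a u u := by
    rw [key, hsymm, key]
  -- expansion
  have hre : a r e = b e e := hr e
  have hrr : a r r = b e r := hr r
  have h3 : b e u = b e e - δ * b e r := by
    rw [hudef, map_sub, map_smul, smul_eq_mul]
  have expand : a u u = a e e - 2 * δ * b e e + δ ^ 2 * a r r := by
    calc a u u = a e u - δ * b e u := hua u
      _ = a u e - δ * b e u := by rw [hsymm e u]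
      _ = (a e e - δ * b e e) - δ * (b e e - δ * b e r) := by rw [hua e, h3]
      _ = a e e - 2 * δ * b e e + δ ^ 2 * a r r := by rw [hrr]; ring
  -- bounds
  have hee0 : 0 ≤ a e e := by
    rw [haa]; nlinarith [hell e, sq_nonneg ‖e‖]
  have heb : b e e = a e e := (haa e).symm
  have hrr_bnd : a r r ≤ Cbnd ^ 2 / Cell ^ 2 * a e e := by
    rcases le_or_gt (a r r) 0 with h | h
    · have : 0 ≤ Cbnd ^ 2 / Cell ^ 2 * a e e := by positivity
      linarith
    · have h1 : a r r ≤ Cbnd * ‖e‖ * ‖r‖ := hrr ▸ hbnd e r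
      have h2 : Cell * ‖r‖ ^ 2 ≤ a r r := haa r ▸ hell r
      have h3 : Cell * ‖e‖ ^ 2 ≤ a e e := haa e ▸ hell e
      have hsq : a r r * a r r ≤ (Cbnd * ‖e‖ * ‖r‖) * (Cbnd * ‖e‖ * ‖r‖) :=
        mul_le_mul h1 h1 h.le (le_trans h.le h1)
      have hprod : (Cell * ‖r‖ ^ 2) * (Cell * ‖e‖ ^ 2) ≤ a r r * a e e :=
        mul_le_mul h2 h3 (by positivity) h.le
      have step1 : Cell ^ 2 * (a r r * a r r) ≤ Cbnd ^ 2 * (a r r * a e e) := by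
        calc Cell ^ 2 * (a r r * a r r)
            ≤ Cell ^ 2 * ((Cbnd * ‖e‖ * ‖r‖) * (Cbnd * ‖e‖ * ‖r‖)) := by
              nlinarith [hsq, sq_nonneg Cell]
          _ = Cbnd ^ 2 * ((Cell * ‖r‖ ^ 2) * (Cell * ‖e‖ ^ 2)) := by ring
          _ ≤ Cbnd ^ 2 * (a r r * a e e) := by nlinarith [hprod, sq_nonneg Cbnd]
      rw [div_mul_eq_mul_div, le_div_iff₀ (by positivity)]
      nlinarith [step1, h]
  have hCnn : 0 ≤ 1 - δ * (2 - δ * Cbnd ^ 2 / Cell ^ 2) := by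
    have ht : δ ≤ δ * Cbnd / Cell := by
      rw [le_div_iff₀ hCell]; nlinarith
    have hk : δ * (δ * Cbnd ^ 2 / Cell ^ 2) = (δ * Cbnd / Cell) ^ 2 := by
      field_simp
    nlinarith [sq_nonneg (1 - δ * Cbnd / Cell), ht, hk]
  have main : a (Z v - Z w) (Z v - Z w)
      ≤ (1 - δ * (2 - δ * Cbnd ^ 2 / Cell ^ 2)) * a e e := by
    rw [hZu, expand, heb]
    have h4 := mul_le_mul_of_nonneg_left hrr_bnd (le_of_lt (by positivity : (0:ℝ) < δ ^ 2))
    have h5 : a e e - 2 * δ * a e e + δ ^ 2 * (Cbnd ^ 2 / Cell ^ 2 * a e e)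
        = (1 - δ * (2 - δ * Cbnd ^ 2 / Cell ^ 2)) * a e e := by ring
    linarith
  calc Real.sqrt (a (Z v - Z w) (Z v - Z w))
      ≤ Real.sqrt ((1 - δ * (2 - δ * Cbnd ^ 2 / Cell ^ 2)) * a e e) :=
        Real.sqrt_le_sqrt main
    _ = Real.sqrt (1 - δ * (2 - δ * Cbnd ^ 2 / Cell ^ 2)) *
          Real.sqrt (a e e) := Real.sqrt_mul hCnn _
end

section
/- Let X be a normed space with norm |||·|||, u* ∈ X, and Z : X → X a map with Z(u*) = u* and Lipschitz constant C_Z ≥ 0 in |||·|||. For each v ∈ X, let Θ_v : X → X satisfy |||Z(v) − Θ_v(w)||| ≤ C_alg·|||Z(v) − w||| for all w ∈ X with a uniform constant C_alg > 0. Define Ψ(v) := Θ_v^J(v) (J-fold iteration of Θ_v applied to v) for a fixed J ∈ ℕ. Then |||u* − Ψ(v)||| ≤ (C_Z + C_alg^J·(C_Z + 1))·|||u* − v||| for all v ∈ X. -/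
/-- Uniform stability of inexact Zarantonello symmetrization. -/
theorem inexact_zarantonello_stable
    {X : Type*} [NormedAddCommGroup X] [NormedSpace ℝ X]
    (ustar : X) (Z : X → X) (CZ : ℝ) (hCZ : 0 ≤ CZ)
    (hfix : Z ustar = ustar)
    (hlip : ∀ v w : X, ‖Z v - Z w‖ ≤ CZ * ‖v - w‖)
    (Θ : X → X → X) (Calg : ℝ) (hCalg : 0 < Calg)
    (hstab : ∀ v w : X, ‖Z v - Θ v w‖ ≤ Calg * ‖Z v - w‖)
    (J : ℕ) :
    ∀ v : X, ‖ustar - (Θ v)^[J] v‖ ≤ (CZ + Calg ^ J * (CZ + 1)) * ‖ustar - v‖ := by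
  intro v
  have key : ∀ n : ℕ, ‖Z v - (Θ v)^[n] v‖ ≤ Calg ^ n * ‖Z v - v‖ := by
    intro n
    induction n with
    | zero => simp
    | succ n ih =>
      rw [Function.iterate_succ_apply']
      calc ‖Z v - Θ v ((Θ v)^[n] v)‖ ≤ Calg * ‖Z v - (Θ v)^[n] v‖ := hstab v _
        _ ≤ Calg * (Calg ^ n * ‖Z v - v‖) := by
            exact mul_le_mul_of_nonneg_left ih hCalg.le
        _ = Calg ^ (n+1) * ‖Z v - v‖ := by ring
  have h1 : ‖ustar - Z v‖ ≤ CZ * ‖ustar - v‖ := by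
    have := hlip ustar v
    rwa [hfix] at this
  have h2 : ‖Z v - v‖ ≤ (CZ + 1) * ‖ustar - v‖ := by
    calc ‖Z v - v‖ = ‖(Z v - ustar) + (ustar - v)‖ := by abel_nf
      _ ≤ ‖Z v - ustar‖ + ‖ustar - v‖ := norm_add_le _ _
      _ ≤ CZ * ‖ustar - v‖ + ‖ustar - v‖ := by
          rw [norm_sub_rev]; linarith
      _ = (CZ + 1) * ‖ustar - v‖ := by ring
  calc ‖ustar - (Θ v)^[J] v‖
      = ‖(ustar - Z v) + (Z v - (Θ v)^[J] v)‖ := by abel_nf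
    _ ≤ ‖ustar - Z v‖ + ‖Z v - (Θ v)^[J] v‖ := norm_add_le _ _
    _ ≤ CZ * ‖ustar - v‖ + Calg ^ J * ‖Z v - v‖ := add_le_add h1 (key J)
    _ ≤ CZ * ‖ustar - v‖ + Calg ^ J * ((CZ + 1) * ‖ustar - v‖) := by
        have : (0:ℝ) ≤ Calg ^ J := pow_nonneg hCalg.le J
        nlinarith [h2]
    _ = (CZ + Calg ^ J * (CZ + 1)) * ‖ustar - v‖ := by ring
end

section
/- In the setting of the previous statement, if additionally C_alg^J·(C_Z+1) → 0 as J → ∞ (e.g. C_alg < 1), then there exists J₀ ∈ ℕ such that for all J ≥ J₀ the map Ψ is a contraction toward u*: |||u* − Ψ(v)||| ≤ q·|||u* − v||| for some q < 1 and all v ∈ X. -/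
/-- Inexact Zarantonello symmetrization is contractive for sufficiently many
inner iterations. -/
theorem inexact_zarantonello_contractive
    {X : Type*} [NormedAddCommGroup X] [NormedSpace ℝ X]
    (ustar : X) (Z : X → X) (CZ : ℝ) (hCZ0 : 0 ≤ CZ) (hCZ1 : CZ < 1)
    (hfix : Z ustar = ustar)
    (hlip : ∀ v w : X, ‖Z v - Z w‖ ≤ CZ * ‖v - w‖)
    (Θ : X → X → X) (Calg : ℝ) (hCalg0 : 0 < Calg) (hCalg1 : Calg < 1)
    (hstab : ∀ v w : X, ‖Z v - Θ v w‖ ≤ Calg * ‖Z v - w‖) :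
    ∃ J₀ : ℕ, ∀ J : ℕ, J₀ ≤ J →
      ∃ q : ℝ, q < 1 ∧ ∀ v : X, ‖ustar - (Θ v)^[J] v‖ ≤ q * ‖ustar - v‖ := by
  have hε : (0:ℝ) < (1 - CZ) / (CZ + 1) := div_pos (by linarith) (by linarith)
  obtain ⟨J₀, hJ₀⟩ := exists_pow_lt_of_lt_one hε hCalg1
  refine ⟨J₀, fun J hJ => ?_⟩
  refine ⟨CZ + Calg ^ J * (CZ + 1), ?_, ?_⟩
  · have hle : Calg ^ J ≤ Calg ^ J₀ :=
      pow_le_pow_of_le_one hCalg0.le hCalg1.le hJ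
    have : Calg ^ J < (1 - CZ) / (CZ + 1) := lt_of_le_of_lt hle hJ₀
    have h1 : Calg ^ J * (CZ + 1) < ((1 - CZ) / (CZ + 1)) * (CZ + 1) := by
      exact mul_lt_mul_of_pos_right this (by linarith)
    rw [div_mul_cancel₀] at h1
    · linarith
    · linarith
  · intro v
    have key : ∀ j : ℕ, ‖Z v - (Θ v)^[j] v‖ ≤ Calg ^ j * ‖Z v - v‖ := by
      intro j
      induction j with
      | zero => simp
      | succ n ih =>
        rw [Function.iterate_succ_apply']
        calc ‖Z v - Θ v ((Θ v)^[n] v)‖ ≤ Calg * ‖Z v - (Θ v)^[n] v‖ := hstab v _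
          _ ≤ Calg * (Calg ^ n * ‖Z v - v‖) :=
            mul_le_mul_of_nonneg_left ih hCalg0.le
          _ = Calg ^ (n + 1) * ‖Z v - v‖ := by ring
    have h1 : ‖ustar - (Θ v)^[J] v‖ ≤ ‖ustar - Z v‖ + ‖Z v - (Θ v)^[J] v‖ := by
      have := norm_sub_le_norm_sub_add_norm_sub ustar (Z v) ((Θ v)^[J] v)
      exact this
    have h2 : ‖ustar - Z v‖ ≤ CZ * ‖ustar - v‖ := by
      calc ‖ustar - Z v‖ = ‖Z ustar - Z v‖ := by rw [hfix]
        _ ≤ CZ * ‖ustar - v‖ := hlip ustar v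
    have h3 : ‖Z v - v‖ ≤ (CZ + 1) * ‖ustar - v‖ := by
      have := norm_sub_le_norm_sub_add_norm_sub (Z v) ustar v
      have h4 : ‖Z v - ustar‖ ≤ CZ * ‖ustar - v‖ := by
        calc ‖Z v - ustar‖ = ‖Z v - Z ustar‖ := by rw [hfix]
          _ ≤ CZ * ‖v - ustar‖ := hlip v ustar
          _ = CZ * ‖ustar - v‖ := by rw [norm_sub_rev]
      linarith
    have h5 := key J
    have hpow : (0:ℝ) ≤ Calg ^ J := pow_nonneg hCalg0.le J
    nlinarith [mul_le_mul_of_nonneg_left h3 hpow]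
end

section
/- Let η_H, η_h ≥ 0 denote estimators on a mesh and its refinement decomposed as η_h² = η_h(kept)² + η_h(new)² and η_H² = η_H(kept)² + η_H(refined)², where η_h(kept) ≤ η_H(kept) (evaluated at the same function) and η_h(new) ≤ q_red·η_H(refined) with 0 < q_red < 1. If moreover the Dörfler criterion θ·η_H² ≤ η_H(refined)² holds with 0 < θ ≤ 1, then η_h ≤ q_est·η_H with q_est := (1 − (1 − q_red²)·θ)^{1/2} < 1. -/
/-- Estimator reduction via Dörfler marking. -/
theorem estimator_reduction
    (ηH ηh ηHk ηHr ηhk ηhn qred θ : ℝ)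
    (hηH : 0 ≤ ηH) (hηh : 0 ≤ ηh) (hηHk : 0 ≤ ηHk) (hηHr : 0 ≤ ηHr)
    (hηhk : 0 ≤ ηhk) (hηhn : 0 ≤ ηhn)
    (hH : ηH ^ 2 = ηHk ^ 2 + ηHr ^ 2)
    (hh : ηh ^ 2 = ηhk ^ 2 + ηhn ^ 2)
    (hqred0 : 0 < qred) (hqred1 : qred < 1)
    (hθ0 : 0 < θ) (hθ1 : θ ≤ 1)
    (hkept : ηhk ≤ ηHk)
    (hnew : ηhn ≤ qred * ηHr)
    (hDoerfler : θ * ηH ^ 2 ≤ ηHr ^ 2) :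
    ηh ≤ Real.sqrt (1 - (1 - qred ^ 2) * θ) * ηH ∧
      Real.sqrt (1 - (1 - qred ^ 2) * θ) < 1 := by
  have hq2 : qred ^ 2 < 1 := by nlinarith
  have hpos : 0 ≤ 1 - (1 - qred ^ 2) * θ := by nlinarith
  constructor
  · have hsq : ηh ^ 2 ≤ (1 - (1 - qred ^ 2) * θ) * ηH ^ 2 := by nlinarith
    have := Real.sqrt_le_sqrt hsq
    rw [Real.sqrt_sq hηh, Real.sqrt_mul hpos, Real.sqrt_sq hηH] at this
    exact this
  · have : Real.sqrt (1 - (1 - qred ^ 2) * θ) < Real.sqrt 1 := by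
      apply Real.sqrt_lt_sqrt hpos
      nlinarith
    simpa using this
end

section
/- Let (H_n)_{n∈ℕ} be a sequence of nonnegative reals and s > 0. If there exist C_lin > 0 and 0 < q_lin < 1 with H_n ≤ C_lin·q_lin^{n−m}·H_m for all m ≤ n, and (T_n)_{n∈ℕ} is a nondecreasing sequence of positive reals, then sup_n (∑_{m=0}^{n} T_m)^s · H_n ≤ C_lin·(1 − q_lin^{1/s})^{-s} · sup_n T_n^s · H_n. -/
/-! With `r = q ^ (1 / s)` and `B = max_{m ≤ n} T m ^ s * H m`, linear decay gives
`T m * H n ^ (1 / s) ≤ (C * B) ^ (1 / s) * r ^ (n - m)` for every `m ≤ n`. Summing the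
geometric series and raising to the power `s` bounds `(∑_{m ≤ n} T m) ^ s * H n` by
`C * (1 - r) ^ (-s) * B`. -/

open Finset

lemma sum_range_succ_pow_sub_le {r : ℝ} (hr0 : 0 ≤ r) (hr1 : r < 1) (n : ℕ) :
    ∑ m ∈ range (n + 1), r ^ (n - m) ≤ (1 - r)⁻¹ := by
  have hreflect := sum_range_reflect (fun k => r ^ k) (n + 1)
  simp only [Nat.add_sub_cancel] at hreflect
  rw [hreflect, range_eq_Ico]
  simpa using geom_sum_Ico_le_of_lt_one hr0 hr1 (m := 0) (n := n + 1)

lemma sum_range_succ_le_of_le_mul_pow_sub {a : ℕ → ℝ} {A r : ℝ} {n : ℕ} (hA : 0 ≤ A)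
    (hr0 : 0 ≤ r) (hr1 : r < 1) (ha : ∀ m ≤ n, a m ≤ A * r ^ (n - m)) :
    ∑ m ∈ range (n + 1), a m ≤ A * (1 - r)⁻¹ :=
  calc ∑ m ∈ range (n + 1), a m
      ≤ ∑ m ∈ range (n + 1), A * r ^ (n - m) :=
        sum_le_sum fun m hm => ha m (mem_range_succ_iff.mp hm)
    _ = A * ∑ m ∈ range (n + 1), r ^ (n - m) := (mul_sum _ _ _).symm
    _ ≤ A * (1 - r)⁻¹ := mul_le_mul_of_nonneg_left (sum_range_succ_pow_sub_le hr0 hr1 n) hA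

lemma mul_rpow_one_div_le_of_rpow_mul_le {t h c q s : ℝ} {k : ℕ} (ht : 0 ≤ t) (hh : 0 ≤ h)
    (hc : 0 ≤ c) (hq : 0 ≤ q) (hs : 0 < s) (hle : t ^ s * h ≤ c * q ^ k) :
    t * h ^ (1 / s) ≤ c ^ (1 / s) * (q ^ (1 / s)) ^ k := by
  have := Real.rpow_le_rpow (by positivity) hle (one_div_nonneg.mpr hs.le)
  rw [one_div] at this ⊢
  rwa [Real.mul_rpow (by positivity) hh, Real.mul_rpow hc (by positivity),
    Real.rpow_rpow_inv ht hs.ne', ← Real.rpow_pow_comm hq] at this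

theorem rpow_sum_range_mul_le_of_linear_decay {H T : ℕ → ℝ} {s C q B : ℝ} {n : ℕ}
    (hH : ∀ n, 0 ≤ H n) (hT : ∀ n, 0 ≤ T n) (hs : 0 < s) (hC : 0 ≤ C) (hq0 : 0 ≤ q)
    (hq1 : q < 1) (hlin : ∀ m ≤ n, H n ≤ C * q ^ (n - m) * H m)
    (hB : ∀ m ≤ n, T m ^ s * H m ≤ B) :
    (∑ m ∈ range (n + 1), T m) ^ s * H n ≤ C * (1 - q ^ (1 / s)) ^ (-s) * B := by
  set r := q ^ (1 / s)
  have hr0 : 0 ≤ r := Real.rpow_nonneg hq0 _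
  have hr1 : r < 1 := Real.rpow_lt_one hq0 hq1 (by positivity)
  have hB0 : 0 ≤ B := (mul_nonneg (Real.rpow_nonneg (hT n) s) (hH n)).trans (hB n le_rfl)
  have hterm : ∀ m ≤ n, T m * H n ^ (1 / s) ≤ (C * B) ^ (1 / s) * r ^ (n - m) := by
    intro m hm
    refine mul_rpow_one_div_le_of_rpow_mul_le (hT m) (hH n) (by positivity) hq0 hs ?_
    calc T m ^ s * H n ≤ T m ^ s * (C * q ^ (n - m) * H m) :=
          mul_le_mul_of_nonneg_left (hlin m hm) (Real.rpow_nonneg (hT m) s)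
      _ = C * q ^ (n - m) * (T m ^ s * H m) := by ring
      _ ≤ C * q ^ (n - m) * B := mul_le_mul_of_nonneg_left (hB m hm) (by positivity)
      _ = C * B * q ^ (n - m) := by ring
  have hsum :
      (∑ m ∈ range (n + 1), T m) * H n ^ (1 / s) ≤ (C * B) ^ (1 / s) * (1 - r)⁻¹ := by
    rw [sum_mul]
    exact sum_range_succ_le_of_le_mul_pow_sub (by positivity) hr0 hr1 hterm
  have h1r : 0 ≤ 1 - r := by linarith
  have hsum0 : 0 ≤ ∑ m ∈ range (n + 1), T m := sum_nonneg fun m _ => hT m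
  have hroot : 0 ≤ H n ^ (1 / s) := Real.rpow_nonneg (hH n) _
  calc (∑ m ∈ range (n + 1), T m) ^ s * H n
      = ((∑ m ∈ range (n + 1), T m) * H n ^ (1 / s)) ^ s := by
        rw [Real.mul_rpow hsum0 hroot, one_div, Real.rpow_inv_rpow (hH n) hs.ne']
    _ ≤ ((C * B) ^ (1 / s) * (1 - r)⁻¹) ^ s :=
        Real.rpow_le_rpow (mul_nonneg hsum0 hroot) hsum hs.le
    _ = C * (1 - r) ^ (-s) * B := by
        rw [Real.mul_rpow (by positivity) (inv_nonneg.mpr h1r), one_div,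
          Real.rpow_inv_rpow (by positivity) hs.ne', Real.inv_rpow h1r, ← Real.rpow_neg h1r]
        ring

theorem rates_eq_complexity_general
    (H T : ℕ → ℝ) (hH : ∀ n, 0 ≤ H n) (hT : ∀ n, 0 < T n)
    (s Clin qlin : ℝ) (hs : 0 < s) (hClin : 0 < Clin)
    (hqlin0 : 0 < qlin) (hqlin1 : qlin < 1)
    (hlin : ∀ m n : ℕ, m ≤ n → H n ≤ Clin * qlin ^ (n - m) * H m) :
    (⨆ n : ℕ, ENNReal.ofReal ((∑ m ∈ Finset.range (n + 1), T m) ^ s * H n))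
      ≤ ENNReal.ofReal (Clin * (1 - qlin ^ (1 / s)) ^ (-s)) *
        ⨆ n : ℕ, ENNReal.ofReal ((T n) ^ s * H n) := by
  refine iSup_le fun n => ?_
  obtain ⟨m₀, -, hmax⟩ :=
    (range (n + 1)).exists_max_image (fun m => T m ^ s * H m) nonempty_range_add_one
  have hbound := rpow_sum_range_mul_le_of_linear_decay hH (fun m => (hT m).le) hs hClin.le
    hqlin0.le hqlin1 (fun m hm => hlin m n hm) (fun m hm => hmax m (mem_range_succ_iff.mpr hm))
  calc ENNReal.ofReal ((∑ m ∈ range (n + 1), T m) ^ s * H n)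
      ≤ ENNReal.ofReal (Clin * (1 - qlin ^ (1 / s)) ^ (-s)) *
          ENNReal.ofReal (T m₀ ^ s * H m₀) := by
        rw [← ENNReal.ofReal_mul' (mul_nonneg (Real.rpow_nonneg (hT m₀).le s) (hH m₀))]
        exact ENNReal.ofReal_le_ofReal hbound
    _ ≤ _ := by
        gcongr
        exact le_iSup (fun k => ENNReal.ofReal (T k ^ s * H k)) m₀

/-- Rates with respect to degrees of freedom and cost coincide. -/
theorem rates_eq_complexity
    (H T : ℕ → ℝ) (hH : ∀ n, 0 ≤ H n) (hT : ∀ n, 0 < T n) (hTmono : Monotone T)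
    (s Clin qlin : ℝ) (hs : 0 < s) (hClin : 0 < Clin)
    (hqlin0 : 0 < qlin) (hqlin1 : qlin < 1)
    (hlin : ∀ m n : ℕ, m ≤ n → H n ≤ Clin * qlin ^ (n - m) * H m) :
    (⨆ n : ℕ, ENNReal.ofReal ((∑ m ∈ Finset.range (n + 1), T m) ^ s * H n))
      ≤ ENNReal.ofReal (Clin * (1 - qlin ^ (1 / s)) ^ (-s)) *
        ⨆ n : ℕ, ENNReal.ofReal ((T n) ^ s * H n) :=
  rates_eq_complexity_general H T hH hT s Clin qlin hs hClin hqlin0 hqlin1 hlin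
end

section
/- Let η, η* ≥ 0 and e ≥ 0, and let η_M, η*_M ≥ 0 be marked-set contributions satisfying: θ^{1/2}·η ≤ η_M (Dörfler for the computed iterate with marked-set contribution η_M), |η_M − η*_M| ≤ C_stab·e (local stability on the marked set), and e ≤ λ·(q/(1−q))·η (algebraic error control). Set λ_opt := (1−q)/(C_stab·q) and assume 0 < λ < θ^{1/2}·λ_opt. Then (θ^{1/2} − λ/λ_opt)·η ≤ η*_M, i.e., the marked set satisfies a Dörfler criterion for the exact discrete solution with positive parameter. -/
/-- Dörfler marking for the exact discrete solution via perturbation. -/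
theorem doerfler_for_exact_solution
    (η ηM ηMstar e Cstab q θ lam : ℝ)
    (hη : 0 ≤ η) (hηM : 0 ≤ ηM) (hηMstar : 0 ≤ ηMstar) (he : 0 ≤ e)
    (hCstab : 0 < Cstab) (hq0 : 0 < q) (hq1 : q < 1)
    (hθ0 : 0 < θ) (hθ1 : θ ≤ 1)
    (hlam0 : 0 < lam) (hlam : lam < Real.sqrt θ * ((1 - q) / (Cstab * q)))
    (hDoerfler : Real.sqrt θ * η ≤ ηM)
    (hstab : |ηM - ηMstar| ≤ Cstab * e)
    (halg : e ≤ lam * (q / (1 - q)) * η) :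
    (Real.sqrt θ - lam / ((1 - q) / (Cstab * q))) * η ≤ ηMstar := by
  have habs := abs_le.mp hstab
  have h1 : ηM - ηMstar ≤ Cstab * e := habs.2
  have hq : 0 < 1 - q := by linarith
  have hkey : lam / ((1 - q) / (Cstab * q)) = Cstab * (lam * (q / (1 - q))) := by
    field_simp
  rw [hkey]
  have hCe : Cstab * e ≤ Cstab * (lam * (q / (1 - q)) * η) :=
    mul_le_mul_of_nonneg_left halg hCstab.le
  nlinarith [hDoerfler, h1]
end
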